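/- arXiv:2310.00544 — 2 statements merged into one kernel-verified Lean document; each statement's English description precedes it below -/
import Mathlib

section
/- Let N ≥ 2, β > 0, U : ℝ^d → ℝ, and W : ℝ^d → ℝ bounded measurable and symmetric with exp(−β E_N) ∈ L¹(ℝ^{Nd}). Let ρ be a probability density on ℝ^d satisfying ρ = Z^{−1} exp(−β(U + W∗ρ)), Z = ∫ exp(−β(U + W∗ρ)) dx, and let ρ_N = Z̄_N^{−1} exp(−β E_N) be the Gibbs density. Define Φ(x_1,…,x_N) = −(1/(2(N−1))) Σ_{i≠j} W(x_i−x_j) + Σ_{i=1}^N (W∗ρ)(x_i) − (N/2) ∫_{ℝ^d} ρ (W∗ρ) dx. Then H(ρ_N | ρ^{⊗N}) = N log Z − log Z_N + β ∫_{ℝ^{Nd}} Φ ρ_N dx, where Z_N = Z̄_N exp(−(Nβ/2)∫ρ(W∗ρ)dx); in particular H(ρ_N | ρ^{⊗N}) ≤ β ∫_{ℝ^{Nd}} Φ ρ_N dx. -/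
open MeasureTheory Real

noncomputable section

/-- `ρ` is a probability density on the measure space `α`. -/
def IsProbDensity {α : Type*} [MeasureSpace α] (ρ : α → ℝ) : Prop :=
  Measurable ρ ∧ (∀ x, 0 ≤ ρ x) ∧ ∫ x, ρ x = 1

/-- The convolution `(W∗ρ)(x) = ∫ W(x−y) ρ(y) dy`. -/
def convW {d : ℕ} (W ρ : (Fin d → ℝ) → ℝ) (x : Fin d → ℝ) : ℝ :=
  ∫ y, W (x - y) * ρ y

/-- The probability measure on `ℝ^d` with density `ρ`. -/
def densMeasure {d : ℕ} (ρ : (Fin d → ℝ) → ℝ) : Measure (Fin d → ℝ) :=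
  volume.withDensity fun x => ENNReal.ofReal (ρ x)

/-- The `N`-body energy
`E_N(x_1,…,x_N) = Σ_i U(x_i) + (1/(2(N−1))) Σ_{i≠j} W(x_i − x_j)`. -/
def energyN {d : ℕ} (U W : (Fin d → ℝ) → ℝ) (N : ℕ) (x : Fin N → (Fin d → ℝ)) : ℝ :=
  (∑ i, U (x i)) +
    (1 / (2 * ((N : ℝ) - 1))) * ∑ i, ∑ j ∈ Finset.univ.erase i, W (x i - x j)

/-- The relative entropy `H(μ|ν) = ∫ log (dμ/dν) dμ` (real-valued version). -/
def relEntR {E : Type*} [MeasurableSpace E] (μ ν : Measure E) : ℝ :=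
  ∫ x, Real.log ((μ.rnDeriv ν x).toReal) ∂μ

/-!
With `ν = ρ^{⊗N}`, the fixed-point equation for `ρ` turns the Gibbs density into an exponential
tilt of `ν`: `ρ_N = (Z^N / Z_N) e^{βΦ} ∏ᵢ ρ(xᵢ)`. Hence `log (dρ_N/dν) = βΦ + N log Z - log Z_N`,
and integrating against `ρ_N` gives the identity. For the inequality, the coordinates are
independent under `ν`, so every pair term `W(xᵢ - xⱼ)` (`i ≠ j`) and every one-body term
`(W∗ρ)(xᵢ)` has mean `∫ ρ (W∗ρ)`, and the normalisation `1/(2(N-1))` makes `∫ Φ dν = 0`.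
Integrating `1 + βΦ ≤ e^{βΦ}` against `ν` then gives `Z^N ≤ Z_N`.
-/

open ProbabilityTheory
open scoped ENNReal

theorem integral_withDensity_ofReal {α : Type*} [MeasurableSpace α] {μ : Measure α}
    {g : α → ℝ} (hg : AEMeasurable g μ) (hg0 : ∀ x, 0 ≤ g x) (h : α → ℝ) :
    ∫ x, h x ∂μ.withDensity (fun x => ENNReal.ofReal (g x)) = ∫ x, g x * h x ∂μ := by
  rw [integral_withDensity_eq_integral_toReal_smul₀ hg.ennreal_ofReal
    (Filter.Eventually.of_forall fun _ => ENNReal.ofReal_lt_top)]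
  simp_rw [ENNReal.toReal_ofReal (hg0 _), smul_eq_mul]

theorem isProbabilityMeasure_withDensity_ofReal {α : Type*} [MeasurableSpace α] {μ : Measure α}
    {g : α → ℝ} (hg0 : ∀ x, 0 ≤ g x) (hg : Integrable g μ) (hg1 : ∫ x, g x ∂μ = 1) :
    IsProbabilityMeasure (μ.withDensity fun x => ENNReal.ofReal (g x)) := by
  constructor
  rw [withDensity_apply _ MeasurableSet.univ, Measure.restrict_univ,
    ← ofReal_integral_eq_lintegral_ofReal hg (Filter.Eventually.of_forall hg0), hg1,
    ENNReal.ofReal_one]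

theorem lintegral_fin_nat_prod_eq_prod {n : ℕ} {E : Type*} [MeasurableSpace E]
    {μ : Fin n → Measure E} [∀ i, SigmaFinite (μ i)]
    {f : Fin n → E → ℝ≥0∞} (hf : ∀ i, Measurable (f i)) :
    ∫⁻ x : Fin n → E, ∏ i, f i (x i) ∂(Measure.pi μ) = ∏ i, ∫⁻ x, f i x ∂(μ i) := by
  induction n with
  | zero => simp
  | succ n ih =>
      calc
        _ = ∫⁻ x : E × (Fin n → E), f 0 x.1 * ∏ i : Fin n, f i.succ (x.2 i)
            ∂((μ 0).prod (Measure.pi (fun i ↦ μ i.succ))) := by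
          rw [← ((measurePreserving_piFinSuccAbove μ 0).symm).lintegral_comp_emb
            (MeasurableEquiv.measurableEmbedding _)]
          simp_rw [MeasurableEquiv.piFinSuccAbove_symm_apply, Fin.insertNthEquiv,
            Fin.prod_univ_succ, Fin.insertNth_zero, Equiv.coe_fn_mk, Fin.cons_succ,
            Fin.zero_succAbove, cast_eq, Fin.cons_zero]
        _ = (∫⁻ x, f 0 x ∂μ 0) * ∏ i : Fin n, ∫⁻ x, f i.succ x ∂(μ i.succ) := by
          rw [lintegral_prod_mul (f := f 0) (g := fun y : Fin n → E => ∏ i, f i.succ (y i))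
            (hf 0).aemeasurable
            (Finset.measurable_prod _ fun i _ =>
              (hf i.succ).comp (measurable_pi_apply i)).aemeasurable,
            ih fun i => hf i.succ]
        _ = ∏ i, ∫⁻ x, f i x ∂(μ i) := by rw [Fin.prod_univ_succ]

theorem pi_withDensity {n : ℕ} {E : Type*} [MeasurableSpace E]
    {μ : Fin n → Measure E} [∀ i, SigmaFinite (μ i)]
    {f : Fin n → E → ℝ≥0∞} (hf : ∀ i, Measurable (f i))
    [∀ i, SigmaFinite ((μ i).withDensity (f i))] :
    Measure.pi (fun i => (μ i).withDensity (f i))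
      = (Measure.pi μ).withDensity fun x => ∏ i, f i (x i) := by
  refine Measure.pi_eq fun s hs => ?_
  rw [withDensity_apply _ (MeasurableSet.univ_pi hs), Measure.restrict_pi_pi,
    lintegral_fin_nat_prod_eq_prod hf]
  exact Finset.prod_congr rfl fun i _ => (withDensity_apply _ (hs i)).symm

section ProductMarginals

variable {ι α : Type*} [Fintype ι] [MeasurableSpace α] {μ : Measure α} [IsProbabilityMeasure μ]

theorem measurePreserving_eval_pair {i j : ι} (hij : i ≠ j) :
    MeasurePreserving (fun x : ι → α => (x i, x j)) (Measure.pi fun _ => μ) (μ.prod μ) := by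
  have hindep : (fun x : ι → α => x i) ⟂ᵢ[Measure.pi fun _ => μ] fun x => x j :=
    (iIndepFun_pi (X := fun _ => id) fun _ => aemeasurable_id).indepFun hij
  refine ⟨by fun_prop, ?_⟩
  rw [(indepFun_iff_map_prod_eq_prod_map_map (measurable_pi_apply i).aemeasurable
      (measurable_pi_apply j).aemeasurable).1 hindep,
    (measurePreserving_eval _ i).map_eq, (measurePreserving_eval _ j).map_eq]

variable {K : α × α → ℝ}

theorem integrable_comp_eval_pair {i j : ι} (hij : i ≠ j) (hK : Integrable K (μ.prod μ)) :
    Integrable (fun x => K (x i, x j)) (Measure.pi fun _ => μ) :=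
  ((measurePreserving_eval_pair hij).integrable_comp hK.aestronglyMeasurable).2 hK

theorem integral_comp_eval_pair {i j : ι} (hij : i ≠ j) (hK : Integrable K (μ.prod μ)) :
    ∫ x, K (x i, x j) ∂(Measure.pi fun _ => μ) = ∫ p, K p ∂(μ.prod μ) := by
  have h := measurePreserving_eval_pair (μ := μ) hij
  rw [← h.map_eq, integral_map h.aemeasurable (h.map_eq ▸ hK.aestronglyMeasurable)]

theorem integrable_sum_sum_erase_pi [DecidableEq ι] (hK : Integrable K (μ.prod μ)) :
    Integrable (fun x => ∑ i, ∑ j ∈ Finset.univ.erase i, K (x i, x j))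
      (Measure.pi fun _ : ι => μ) :=
  integrable_finsetSum _ fun _ _ => integrable_finsetSum _ fun _ hj =>
    integrable_comp_eval_pair (Finset.ne_of_mem_erase hj).symm hK

theorem integral_sum_sum_erase_pi [DecidableEq ι] (hK : Integrable K (μ.prod μ)) :
    ∫ x, ∑ i, ∑ j ∈ Finset.univ.erase i, K (x i, x j) ∂(Measure.pi fun _ : ι => μ)
      = Fintype.card ι * (Fintype.card ι - 1) * ∫ p, K p ∂(μ.prod μ) := by
  have hrow : ∀ i : ι, ∫ x, ∑ j ∈ Finset.univ.erase i, K (x i, x j) ∂(Measure.pi fun _ => μ)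
      = (Fintype.card ι - 1) * ∫ p, K p ∂(μ.prod μ) := fun i => by
    have hij : ∀ j ∈ Finset.univ.erase i, i ≠ j := fun j hj => (Finset.ne_of_mem_erase hj).symm
    rw [integral_finsetSum _ fun j hj => integrable_comp_eval_pair (hij j hj) hK,
      Finset.sum_congr rfl fun j hj => integral_comp_eval_pair (hij j hj) hK, Finset.sum_const,
      Finset.card_erase_of_mem (Finset.mem_univ i), nsmul_eq_mul, Finset.card_univ,
      Nat.cast_pred (Fintype.card_pos_iff.2 ⟨i⟩)]
  rw [integral_finsetSum _ fun i _ => integrable_finsetSum _ fun j hj =>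
    integrable_comp_eval_pair (Finset.ne_of_mem_erase hj).symm hK]
  simp_rw [hrow, Finset.sum_const, Finset.card_univ, nsmul_eq_mul, mul_assoc]

theorem integrable_sum_pi {g : α → ℝ} (hg : Integrable g μ) :
    Integrable (fun x => ∑ i, g (x i)) (Measure.pi fun _ : ι => μ) :=
  integrable_finsetSum _ fun _ _ => integrable_comp_eval hg

theorem integral_sum_pi {g : α → ℝ} (hg : Integrable g μ) :
    ∫ x, ∑ i, g (x i) ∂(Measure.pi fun _ : ι => μ) = Fintype.card ι * ∫ y, g y ∂μ := by
  rw [integral_finsetSum _ fun i _ => integrable_comp_eval hg, Finset.card_univ.symm]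
  simp [integral_comp_eval (μ := fun _ => μ) hg.aestronglyMeasurable]

end ProductMarginals

section ExponentialDensity

variable {α : Type*} [MeasurableSpace α] {μ ν : Measure α} [IsProbabilityMeasure μ]
  {f : α → ℝ} {K : ℝ}

theorem relEntR_eq_integral_sub_log [SigmaFinite ν] (hf : Measurable f) (hK : 0 < K)
    (hμ : μ = ν.withDensity fun x => ENNReal.ofReal (exp (f x) / K)) (hfi : Integrable f μ) :
    relEntR μ ν = ∫ x, f x ∂μ - log K := by
  have hdens : μ.rnDeriv ν =ᵐ[ν] fun x => ENNReal.ofReal (exp (f x) / K) :=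
    hμ ▸ Measure.rnDeriv_withDensity ν (by fun_prop)
  have hμν : μ ≪ ν := hμ ▸ withDensity_absolutelyContinuous ν _
  have hlog : ∀ᵐ x ∂μ, log (μ.rnDeriv ν x).toReal = f x - log K := by
    filter_upwards [hμν.ae_le hdens] with x hx
    rw [hx, ENNReal.toReal_ofReal (by positivity), log_div (exp_pos _).ne' hK.ne', log_exp]
  rw [relEntR, integral_congr_ae hlog, integral_sub hfi (integrable_const _), integral_const,
    probReal_univ, one_smul]

theorem integral_le_log_of_eq_withDensity_exp_div [IsProbabilityMeasure ν] (hf : Integrable f ν)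
    (hK : 0 < K) (hμ : μ = ν.withDensity fun x => ENNReal.ofReal (exp (f x) / K)) :
    ∫ x, f x ∂ν ≤ log K := by
  have hmass : ∫⁻ x, ENNReal.ofReal (exp (f x) / K) ∂ν = 1 := by
    rw [← setLIntegral_univ, ← withDensity_apply _ MeasurableSet.univ, ← hμ, measure_univ]
  have hmeas : AEStronglyMeasurable (fun x => exp (f x) / K) ν := by
    have := hf.aestronglyMeasurable.aemeasurable
    fun_prop
  have hint : Integrable (fun x => exp (f x) / K) ν := by
    refine (integrable_toReal_of_lintegral_ne_top hmeas.aemeasurable.ennreal_ofReal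
      (by simp [hmass])).congr (Filter.Eventually.of_forall fun x => ?_)
    simp only [ENNReal.toReal_ofReal (by positivity : 0 ≤ exp (f x) / K)]
  have hone : ∫ x, exp (f x) / K ∂ν = 1 := by
    rw [integral_eq_lintegral_of_nonneg_ae (Filter.Eventually.of_forall fun x => by positivity)
      hmeas, hmass, ENNReal.toReal_one]
  have hle : ∫ x, (f x - log K + 1) ∂ν ≤ ∫ x, exp (f x) / K ∂ν := by
    refine integral_mono ((hf.sub (integrable_const _)).add (integrable_const _)) hint
      fun x => ?_
    rw [← exp_log hK, ← exp_sub, exp_log hK]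
    exact add_one_le_exp _
  rw [integral_add (f := fun x => f x - log K) (hf.sub (integrable_const _)) (integrable_const 1),
    integral_sub hf (integrable_const _), hone] at hle
  simp only [integral_const, probReal_univ, one_smul] at hle
  linarith

end ExponentialDensity

namespace IsProbDensity

variable {d : ℕ} {ρ : (Fin d → ℝ) → ℝ}

theorem integrable (hρ : IsProbDensity ρ) : Integrable ρ :=
  Integrable.of_integral_ne_zero (by rw [hρ.2.2]; exact one_ne_zero)

theorem isProbabilityMeasure (hρ : IsProbDensity ρ) : IsProbabilityMeasure (densMeasure ρ) :=
  isProbabilityMeasure_withDensity_ofReal hρ.2.1 hρ.integrable hρ.2.2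

theorem integral_densMeasure (hρ : IsProbDensity ρ) (g : (Fin d → ℝ) → ℝ) :
    ∫ x, g x ∂densMeasure ρ = ∫ x, ρ x * g x :=
  integral_withDensity_ofReal hρ.1.aemeasurable hρ.2.1 g

theorem pos_of_eq_exp_div {g : (Fin d → ℝ) → ℝ} {Z : ℝ} (hρ : IsProbDensity ρ)
    (hfix : ∀ x, ρ x = exp (g x) / Z) : 0 < Z := by
  by_contra! hZ
  have h0 : ρ = 0 := funext fun x => le_antisymm
    (by rw [hfix]; exact div_nonpos_of_nonneg_of_nonpos (exp_pos _).le hZ) (hρ.2.1 x)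
  simpa [h0] using hρ.2.2

end IsProbDensity

section MeanField

variable {d : ℕ} {W ρ : (Fin d → ℝ) → ℝ}

theorem convW_eq_integral_densMeasure (hρ : IsProbDensity ρ) (x : Fin d → ℝ) :
    convW W ρ x = ∫ y, W (x - y) ∂densMeasure ρ := by
  rw [hρ.integral_densMeasure, convW]
  simp_rw [mul_comm]

theorem measurable_convW (hW : Measurable W) (hρ : Measurable ρ) : Measurable (convW W ρ) :=
  (((hW.comp (measurable_fst.sub measurable_snd)).mul
    (hρ.comp measurable_snd)).stronglyMeasurable.integral_prod_right').measurable

theorem abs_convW_le (hρ : IsProbDensity ρ) {M : ℝ} (hWbdd : ∀ z, |W z| ≤ M) (x : Fin d → ℝ) :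
    |convW W ρ x| ≤ M := by
  have := hρ.isProbabilityMeasure
  rw [convW_eq_integral_densMeasure hρ, ← Real.norm_eq_abs]
  simpa using norm_integral_le_of_norm_le_const (μ := densMeasure ρ) (f := fun y => W (x - y))
    (Filter.Eventually.of_forall fun y => by rw [Real.norm_eq_abs]; exact hWbdd (x - y))

def meanFieldFluctuation (W ρ : (Fin d → ℝ) → ℝ) (N : ℕ) (x : Fin N → Fin d → ℝ) : ℝ :=
  -(1 / (2 * ((N : ℝ) - 1))) * (∑ i, ∑ j ∈ Finset.univ.erase i, W (x i - x j))
    + (∑ i, convW W ρ (x i)) - ((N : ℝ) / 2) * ∫ y, ρ y * convW W ρ y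

theorem measurable_meanFieldFluctuation (hW : Measurable W) (hρ : Measurable ρ) (N : ℕ) :
    Measurable (meanFieldFluctuation W ρ N) := by
  have := measurable_convW hW hρ
  unfold meanFieldFluctuation
  fun_prop

theorem exists_abs_meanFieldFluctuation_le (hρ : IsProbDensity ρ) {M : ℝ}
    (hWbdd : ∀ z, |W z| ≤ M) (N : ℕ) :
    ∃ C, ∀ x, |meanFieldFluctuation W ρ N x| ≤ C := by
  refine ⟨|1 / (2 * ((N : ℝ) - 1))| * ∑ i : Fin N, ∑ _j ∈ Finset.univ.erase i, M
    + ∑ _i : Fin N, M + |(N : ℝ) / 2 * ∫ y, ρ y * convW W ρ y|, fun x => ?_⟩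
  have hpairs : |∑ i, ∑ j ∈ Finset.univ.erase i, W (x i - x j)|
      ≤ ∑ i : Fin N, ∑ _j ∈ Finset.univ.erase i, M :=
    (Finset.abs_sum_le_sum_abs _ _).trans <| Finset.sum_le_sum fun i _ =>
      (Finset.abs_sum_le_sum_abs _ _).trans <| Finset.sum_le_sum fun j _ => hWbdd _
  have hsingles : |∑ i, convW W ρ (x i)| ≤ ∑ _i : Fin N, M :=
    (Finset.abs_sum_le_sum_abs _ _).trans <| Finset.sum_le_sum fun i _ => abs_convW_le hρ hWbdd _
  unfold meanFieldFluctuation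
  refine (abs_sub _ _).trans (add_le_add_left ((abs_add_le _ _).trans ?_) _)
  rw [abs_mul, abs_neg]
  gcongr

theorem integrable_meanFieldFluctuation (hρ : IsProbDensity ρ) (hW : Measurable W) {M : ℝ}
    (hWbdd : ∀ z, |W z| ≤ M) (N : ℕ) (μ : Measure (Fin N → Fin d → ℝ)) [IsFiniteMeasure μ] :
    Integrable (meanFieldFluctuation W ρ N) μ :=
  have ⟨C, hC⟩ := exists_abs_meanFieldFluctuation_le hρ hWbdd N
  .of_bound (measurable_meanFieldFluctuation hW hρ.1 N).aestronglyMeasurable C (ae_of_all _ hC)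

theorem integral_meanFieldFluctuation_eq_zero {N : ℕ} (hN : N ≠ 1) (hρ : IsProbDensity ρ)
    (hW : Measurable W) {M : ℝ} (hWbdd : ∀ z, |W z| ≤ M) :
    ∫ x, meanFieldFluctuation W ρ N x ∂(Measure.pi fun _ => densMeasure ρ) = 0 := by
  have := hρ.isProbabilityMeasure
  set c := ∫ y, ρ y * convW W ρ y
  have hc : ∫ u, convW W ρ u ∂densMeasure ρ = c := hρ.integral_densMeasure _
  have hWint : Integrable (fun p : (Fin d → ℝ) × (Fin d → ℝ) => W (p.1 - p.2))
      ((densMeasure ρ).prod (densMeasure ρ)) :=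
    Integrable.of_bound (hW.comp (measurable_fst.sub measurable_snd)).aestronglyMeasurable M
      (ae_of_all _ fun p => hWbdd _)
  have hconv : Integrable (convW W ρ) (densMeasure ρ) :=
    Integrable.of_bound (measurable_convW hW hρ.1).aestronglyMeasurable M
      (ae_of_all _ (abs_convW_le hρ hWbdd))
  have hpairs : ∫ x : Fin N → Fin d → ℝ, ∑ i, ∑ j ∈ Finset.univ.erase i, W (x i - x j)
      ∂(Measure.pi fun _ => densMeasure ρ) = N * (N - 1) * c := by
    rw [integral_sum_sum_erase_pi (ι := Fin N) hWint, integral_prod _ hWint]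
    simp only [Fintype.card_fin]
    simp_rw [← convW_eq_integral_densMeasure hρ, hc]
  have hsingles : ∫ x : Fin N → Fin d → ℝ, ∑ i, convW W ρ (x i)
      ∂(Measure.pi fun _ => densMeasure ρ) = N * c := by
    rw [integral_sum_pi hconv, hc, Fintype.card_fin]
  have hpairsInt := integrable_sum_sum_erase_pi (ι := Fin N) hWint
  have hsinglesInt := integrable_sum_pi (ι := Fin N) hconv
  have hN' : (N : ℝ) - 1 ≠ 0 := sub_ne_zero.2 (by exact_mod_cast hN)
  unfold meanFieldFluctuation
  rw [integral_sub, integral_add, integral_const_mul, hpairs, hsingles, integral_const,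
    probReal_univ, one_smul]
  · field_simp
    ring
  · exact hpairsInt.const_mul _
  · exact hsinglesInt
  · exact (hpairsInt.const_mul _).add hsinglesInt
  · exact integrable_const _

end MeanField

section Gibbs

variable {d N : ℕ} {U W ρ : (Fin d → ℝ) → ℝ} {β Z : ℝ}

theorem exp_neg_energyN_div_eq (hZ : Z ≠ 0)
    (hfix : ∀ x, ρ x = exp (-β * (U x + convW W ρ x)) / Z) (ZbarN : ℝ) (x : Fin N → Fin d → ℝ) :
    exp (-β * energyN U W N x) / ZbarN
      = (∏ i, ρ (x i)) * (exp (β * meanFieldFluctuation W ρ N x)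
        / (ZbarN * exp (-((N : ℝ) * β / 2) * ∫ y, ρ y * convW W ρ y) / Z ^ N)) := by
  rw [Finset.prod_congr rfl fun i _ => hfix (x i), Finset.prod_div_distrib, ← exp_sum,
    Finset.prod_const, Finset.card_univ, Fintype.card_fin]
  unfold meanFieldFluctuation energyN
  field_simp
  rw [← exp_add, ← exp_add]
  congr 2
  simp only [Finset.sum_neg_distrib, ← Finset.mul_sum, Finset.sum_add_distrib]
  ring

theorem withDensity_exp_neg_energyN_div_eq (hρ : IsProbDensity ρ) (hW : Measurable W)
    (hZ : Z ≠ 0) (hfix : ∀ x, ρ x = exp (-β * (U x + convW W ρ x)) / Z) (ZbarN : ℝ) :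
    volume.withDensity (fun x => ENNReal.ofReal (exp (-β * energyN U W N x) / ZbarN))
      = (Measure.pi fun _ : Fin N => densMeasure ρ).withDensity fun x =>
          ENNReal.ofReal (exp (β * meanFieldFluctuation W ρ N x)
            / (ZbarN * exp (-((N : ℝ) * β / 2) * ∫ y, ρ y * convW W ρ y) / Z ^ N)) := by
  have : IsProbabilityMeasure (volume.withDensity fun y => ENNReal.ofReal (ρ y)) :=
    hρ.isProbabilityMeasure
  have hρm := hρ.1
  have hΦm := measurable_meanFieldFluctuation hW hρm N
  unfold densMeasure
  rw [pi_withDensity fun _ => hρm.ennreal_ofReal, ← volume_pi, ← withDensity_mul _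
    (by fun_prop) (by fun_prop)]
  congr with x
  rw [Pi.mul_apply, ← ENNReal.ofReal_prod_of_nonneg fun i _ => hρ.2.1 (x i),
    ← ENNReal.ofReal_mul (Finset.prod_nonneg fun i _ => hρ.2.1 (x i)),
    exp_neg_energyN_div_eq hZ hfix]

end Gibbs

theorem entropy_decomposition_general {d N : ℕ} (hN : 2 ≤ N) (β : ℝ)
    (U W : (Fin d → ℝ) → ℝ) (hW : Measurable W)
    (M : ℝ) (hWbdd : ∀ z, |W z| ≤ M)
    (hexp : Integrable (fun x : Fin N → (Fin d → ℝ) => Real.exp (-β * energyN U W N x)))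
    (ρ : (Fin d → ℝ) → ℝ) (hρ : IsProbDensity ρ)
    (Z : ℝ)
    (hfix : ∀ x, ρ x = Real.exp (-β * (U x + convW W ρ x)) / Z)
    (ZbarN : ℝ) (hZbarN : ZbarN = ∫ x : Fin N → (Fin d → ℝ), Real.exp (-β * energyN U W N x))
    (ZN : ℝ) (hZN : ZN = ZbarN * Real.exp (-((N : ℝ) * β / 2) * ∫ x, ρ x * convW W ρ x))
    (ρN : (Fin N → (Fin d → ℝ)) → ℝ)
    (hρN : ρN = fun x => Real.exp (-β * energyN U W N x) / ZbarN)
    (Φ : (Fin N → (Fin d → ℝ)) → ℝ)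
    (hΦ : Φ = fun x =>
      -(1 / (2 * ((N : ℝ) - 1))) * (∑ i, ∑ j ∈ Finset.univ.erase i, W (x i - x j))
      + (∑ i, convW W ρ (x i)) - ((N : ℝ) / 2) * ∫ y, ρ y * convW W ρ y) :
    relEntR (volume.withDensity fun x => ENNReal.ofReal (ρN x))
        (Measure.pi fun _ : Fin N => densMeasure ρ)
      = (N : ℝ) * Real.log Z - Real.log ZN + β * ∫ x, Φ x * ρN x ∧
    relEntR (volume.withDensity fun x => ENNReal.ofReal (ρN x))
        (Measure.pi fun _ : Fin N => densMeasure ρ)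
      ≤ β * ∫ x, Φ x * ρN x := by
  obtain rfl : Φ = meanFieldFluctuation W ρ N := hΦ
  have hZ : 0 < Z := hρ.pos_of_eq_exp_div hfix
  have hZbar : 0 < ZbarN := hZbarN ▸ integral_exp_pos hexp
  have hZN0 : 0 < ZN := by rw [hZN]; positivity
  have hK : 0 < ZN / Z ^ N := div_pos hZN0 (pow_pos hZ N)
  have hgibbs : volume.withDensity (fun x => ENNReal.ofReal (ρN x))
      = (Measure.pi fun _ => densMeasure ρ).withDensity fun x =>
          ENNReal.ofReal (exp (β * meanFieldFluctuation W ρ N x) / (ZN / Z ^ N)) := by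
    rw [hρN, hZN]
    exact withDensity_exp_neg_energyN_div_eq hρ hW hZ.ne' hfix ZbarN
  have hρN0 : ∀ x, 0 ≤ ρN x := fun x => hρN ▸ div_nonneg (exp_pos _).le hZbar.le
  have hρNm : AEMeasurable ρN := hρN ▸ (hexp.div_const _).aemeasurable
  have : IsProbabilityMeasure (volume.withDensity fun x => ENNReal.ofReal (ρN x)) :=
    isProbabilityMeasure_withDensity_ofReal hρN0 (hρN ▸ hexp.div_const _) (by
      rw [hρN, integral_div, ← hZbarN, div_self hZbar.ne'])
  have := hρ.isProbabilityMeasure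
  have hrel := relEntR_eq_integral_sub_log
    ((measurable_meanFieldFluctuation hW hρ.1 N).const_mul β) hK hgibbs
    ((integrable_meanFieldFluctuation hρ hW hWbdd N _).const_mul β)
  have hmean := integral_le_log_of_eq_withDensity_exp_div
    ((integrable_meanFieldFluctuation hρ hW hWbdd N _).const_mul β) hK hgibbs
  rw [integral_const_mul, integral_meanFieldFluctuation_eq_zero (by omega) hρ hW hWbdd,
    mul_zero] at hmean
  rw [integral_withDensity_ofReal hρNm hρN0] at hrel
  simp only [mul_left_comm (ρN _) β, mul_comm (ρN _), integral_const_mul] at hrel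
  rw [log_div hZN0.ne' (pow_ne_zero N hZ.ne'), log_pow] at hrel hmean
  constructor <;> linarith

/-- entropy decomposition. With
`Φ = −(1/(2(N−1))) Σ_{i≠j} W(xᵢ−xⱼ) + Σᵢ (W∗ρ)(xᵢ) − (N/2)∫ρ(W∗ρ)`, one has
`H(ρ_N | ρ^{⊗N}) = N log Z − log Z_N + β ∫ Φ ρ_N dx`, where
`Z_N = Z̄_N exp(−(Nβ/2)∫ρ(W∗ρ))`; in particular `H(ρ_N | ρ^{⊗N}) ≤ β ∫ Φ ρ_N dx`. -/
theorem entropy_decomposition {d N : ℕ} (hN : 2 ≤ N) (β : ℝ) (hβ : 0 < β)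
    (U W : (Fin d → ℝ) → ℝ) (hU : Measurable U) (hW : Measurable W)
    (M : ℝ) (hWbdd : ∀ z, |W z| ≤ M) (hWsymm : ∀ z, W (-z) = W z)
    (hexp : Integrable (fun x : Fin N → (Fin d → ℝ) => Real.exp (-β * energyN U W N x)))
    (ρ : (Fin d → ℝ) → ℝ) (hρ : IsProbDensity ρ)
    (Z : ℝ) (hZ : Z = ∫ x, Real.exp (-β * (U x + convW W ρ x)))
    (hfix : ∀ x, ρ x = Real.exp (-β * (U x + convW W ρ x)) / Z)
    (ZbarN : ℝ) (hZbarN : ZbarN = ∫ x : Fin N → (Fin d → ℝ), Real.exp (-β * energyN U W N x))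
    (ZN : ℝ) (hZN : ZN = ZbarN * Real.exp (-((N : ℝ) * β / 2) * ∫ x, ρ x * convW W ρ x))
    (ρN : (Fin N → (Fin d → ℝ)) → ℝ)
    (hρN : ρN = fun x => Real.exp (-β * energyN U W N x) / ZbarN)
    (Φ : (Fin N → (Fin d → ℝ)) → ℝ)
    (hΦ : Φ = fun x =>
      -(1 / (2 * ((N : ℝ) - 1))) * (∑ i, ∑ j ∈ Finset.univ.erase i, W (x i - x j))
      + (∑ i, convW W ρ (x i)) - ((N : ℝ) / 2) * ∫ y, ρ y * convW W ρ y) :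
    relEntR (volume.withDensity fun x => ENNReal.ofReal (ρN x))
        (Measure.pi fun _ : Fin N => densMeasure ρ)
      = (N : ℝ) * Real.log Z - Real.log ZN + β * ∫ x, Φ x * ρN x ∧
    relEntR (volume.withDensity fun x => ENNReal.ofReal (ρN x))
        (Measure.pi fun _ : Fin N => densMeasure ρ)
      ≤ β * ∫ x, Φ x * ρN x :=
  entropy_decomposition_general hN β U W hW M hWbdd hexp ρ hρ Z hfix ZbarN hZbarN ZN hZN ρN hρN Φ hΦ
end
end

section
/- Let ρ be a probability density on ℝ^d, W ∈ L^∞(ℝ^d) symmetric, α > d/2, and C_α = ∫_{ℝ^d}(1+|ξ|²)^{−α} dξ. Then there exist η > 0 (depending on α and W through the Jabin–Wang bound applied to the functions φ_ξ(x,y) = Re[(e^{iξ·x} − ρ̂(ξ))(e^{−iξ·y} − \overline{ρ̂(ξ)})]) and a constant C depending on α such that, with X_1,…,X_N i.i.d. from ρ and μ_N = (1/N)Σ_j δ_{X_j}: sup_{ξ ∈ ℝ^d} sup_{N ≥ 2} 𝔼 exp( N η C_α | μ̂_N(ξ) − ρ̂(ξ) |² ) ≤ C, where μ̂_N(ξ)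 = (1/N) Σ_{j=1}^N e^{iξ·X_j} and ρ̂(ξ) = ∫ e^{iξ·x} ρ(x) dx. -/
/-! The real and imaginary parts of `e^{iξ·X_j} − ρ̂(ξ)` are i.i.d., centred and take values in
an interval of length 2, so by Hoeffding's lemma their sums `S_re`, `S_im` over `j < N` are
sub-Gaussian with variance proxy `N`. A sub-Gaussian `S` with proxy `c` satisfies
`𝔼 exp(S² / 4c) ≤ √2`: write `exp(S² / 4c)` as a Gaussian integral of `exp(s S)` over `s`,
exchange the integrals and bound the moment generating function. Since
`N |μ̂_N(ξ) − ρ̂(ξ)|² = (S_re² + S_im²) / N`, convexity of `exp` gives the bound `√2`, uniformly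
in `ξ` and `N`, as soon as `η C_α ≤ 1/8`. -/

open MeasureTheory Real

noncomputable section

open ProbabilityTheory
open scoped ENNReal NNReal

lemma lintegral_exp_mul_sub_mul_sq {k : ℝ} (hk : 0 < k) (x : ℝ) :
    ∫⁻ s, ENNReal.ofReal (exp (x * s - k * s ^ 2))
      = ENNReal.ofReal (√(π / k) * exp (x ^ 2 / (4 * k))) := by
  have h_complete_sq : (fun s => exp (x * s - k * s ^ 2))
      = fun s => exp (x ^ 2 / (4 * k)) * exp (-k * (s - x / (2 * k)) ^ 2) := by
    funext s
    rw [← exp_add]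
    congr 1
    field_simp
    ring
  have h_int : Integrable (fun s => exp (x * s - k * s ^ 2)) := by
    rw [h_complete_sq]
    exact ((integrable_exp_neg_mul_sq hk).comp_sub_right _).const_mul _
  rw [← ofReal_integral_eq_lintegral_ofReal h_int (ae_of_all _ fun _ => (exp_pos _).le),
    h_complete_sq, integral_const_mul,
    integral_sub_right_eq_self (fun s => exp (-k * s ^ 2)), integral_gaussian, mul_comm]

lemma lintegral_ofReal_exp_add_div_two_le {α : Type*} [MeasurableSpace α] {ν : Measure α}
    {A B : α → ℝ} (hA : Measurable A) :
    ∫⁻ x, ENNReal.ofReal (exp ((A x + B x) / 2)) ∂ν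
      ≤ (∫⁻ x, ENNReal.ofReal (exp (A x)) ∂ν) / 2 + (∫⁻ x, ENNReal.ofReal (exp (B x)) ∂ν) / 2 := by
  have h_pointwise (x : α) : ENNReal.ofReal (exp ((A x + B x) / 2))
      ≤ ENNReal.ofReal (exp (A x)) * 2⁻¹ + ENNReal.ofReal (exp (B x)) * 2⁻¹ := by
    have h_convex := convexOn_exp.2 (Set.mem_univ (A x)) (Set.mem_univ (B x))
      (by norm_num : (0 : ℝ) ≤ 1 / 2) (by norm_num : (0 : ℝ) ≤ 1 / 2) (by norm_num)
    simp only [smul_eq_mul] at h_convex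
    rw [← div_eq_mul_inv, ← div_eq_mul_inv, ← ENNReal.add_div,
      ← ENNReal.ofReal_add (exp_pos _).le (exp_pos _).le, ← ENNReal.ofReal_ofNat 2,
      ← ENNReal.ofReal_div_of_pos two_pos]
    refine ENNReal.ofReal_le_ofReal ?_
    rw [show (A x + B x) / 2 = 1 / 2 * A x + 1 / 2 * B x by ring]
    linarith
  refine (lintegral_mono h_pointwise).trans_eq ?_
  rw [lintegral_add_left (by fun_prop), lintegral_mul_const' _ _ (by norm_num),
    lintegral_mul_const' _ _ (by norm_num)]
  rfl

lemma norm_sq_average_sub {N : ℕ} (hN : N ≠ 0) (z : Fin N → ℂ) (m : ℂ) :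
    ‖(1 / (N : ℂ)) * ∑ j, z j - m‖ ^ 2
      = ((∑ j, ((z j).re - m.re)) ^ 2 + (∑ j, ((z j).im - m.im)) ^ 2) / N ^ 2 := by
  have h_center : (1 / (N : ℂ)) * ∑ j, z j - m = ((1 / N : ℝ) : ℂ) * ∑ j, (z j - m) := by
    rw [Finset.sum_sub_distrib]
    simp only [Finset.sum_const, Finset.card_univ, Fintype.card_fin, nsmul_eq_mul]
    push_cast
    field_simp
  rw [h_center, Complex.sq_norm, Complex.normSq_apply, Complex.re_ofReal_mul,
    Complex.im_ofReal_mul, Complex.re_sum, Complex.im_sum]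
  simp only [Complex.sub_re, Complex.sub_im]
  ring

section SubGaussian

variable {Ω : Type*} [MeasurableSpace Ω] {μ : Measure Ω}

lemma isFiniteMeasure_of_hasSubgaussianMGF {X : Ω → ℝ} {c : ℝ≥0}
    (h : HasSubgaussianMGF X c μ) : IsFiniteMeasure μ := by
  simpa [integrable_const_iff] using h.integrable_exp_mul 0

lemma lintegral_exp_sq_le_of_hasSubgaussianMGF {X : Ω → ℝ} {c : ℝ≥0} (hc : 0 < c)
    (h : HasSubgaussianMGF X c μ) :
    ∫⁻ ω, ENNReal.ofReal (exp (X ω ^ 2 / (4 * c))) ∂μ ≤ ENNReal.ofReal √2 := by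
  have := isFiniteMeasure_of_hasSubgaussianMGF h
  have hc' : (0 : ℝ) < c := hc
  have h_norm_ne_zero : ENNReal.ofReal √(π / c) ≠ 0 := by
    simp only [ne_eq, ENNReal.ofReal_eq_zero, not_le]
    positivity
  have h_inner (s : ℝ) : ∫⁻ ω, ENNReal.ofReal (exp (X ω * s - c * s ^ 2)) ∂μ
      ≤ ENNReal.ofReal (exp (0 * s - c / 2 * s ^ 2)) :=
    calc ∫⁻ ω, ENNReal.ofReal (exp (X ω * s - c * s ^ 2)) ∂μ
        = ENNReal.ofReal (exp (-(c * s ^ 2))) * ENNReal.ofReal (mgf X μ s) := by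
          rw [mgf, ofReal_integral_eq_lintegral_ofReal (h.integrable_exp_mul s)
            (ae_of_all _ fun _ => (exp_pos _).le), ← lintegral_const_mul' _ _ ENNReal.ofReal_ne_top]
          refine lintegral_congr fun ω => ?_
          rw [← ENNReal.ofReal_mul (exp_pos _).le, ← exp_add, mul_comm (X ω), sub_eq_neg_add]
      _ ≤ ENNReal.ofReal (exp (-(c * s ^ 2))) * ENNReal.ofReal (exp (c * s ^ 2 / 2)) :=
          mul_le_mul_right (ENNReal.ofReal_le_ofReal (h.mgf_le s)) _
      _ = ENNReal.ofReal (exp (0 * s - c / 2 * s ^ 2)) := by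
          rw [← ENNReal.ofReal_mul (exp_pos _).le, ← exp_add]
          ring_nf
  refine (ENNReal.mul_le_mul_iff_right h_norm_ne_zero ENNReal.ofReal_ne_top).mp ?_
  calc ENNReal.ofReal √(π / c) * ∫⁻ ω, ENNReal.ofReal (exp (X ω ^ 2 / (4 * c))) ∂μ
      = ∫⁻ ω, ∫⁻ s, ENNReal.ofReal (exp (X ω * s - c * s ^ 2)) ∂volume ∂μ := by
        rw [← lintegral_const_mul' _ _ ENNReal.ofReal_ne_top]
        refine lintegral_congr fun ω => ?_
        rw [lintegral_exp_mul_sub_mul_sq hc', ENNReal.ofReal_mul (sqrt_nonneg _)]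
    _ = ∫⁻ s, ∫⁻ ω, ENNReal.ofReal (exp (X ω * s - c * s ^ 2)) ∂μ := by
        have hX : AEMeasurable (fun p : Ω × ℝ => X p.1) (μ.prod volume) :=
          h.aemeasurable.comp_fst
        exact lintegral_lintegral_swap
          ((hX.mul measurable_snd.aemeasurable).sub (by fun_prop)).exp.ennreal_ofReal
    _ ≤ ∫⁻ s, ENNReal.ofReal (exp (0 * s - c / 2 * s ^ 2)) := lintegral_mono h_inner
    _ = ENNReal.ofReal √(π / c) * ENNReal.ofReal √2 := by
        rw [lintegral_exp_mul_sub_mul_sq (by positivity), zero_pow two_ne_zero, zero_div, exp_zero,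
          mul_one, ← ENNReal.ofReal_mul (sqrt_nonneg _), ← sqrt_mul (by positivity)]
        congr 2
        field_simp

variable [IsProbabilityMeasure μ]

lemma hasSubgaussianMGF_sum_pi {ι : Type*} [Fintype ι] {u : Ω → ℝ} {c : ℝ≥0}
    (h : HasSubgaussianMGF u c μ) :
    HasSubgaussianMGF (fun x : ι → Ω => ∑ j, u (x j)) (Fintype.card ι * c)
      (Measure.pi fun _ => μ) := by
  have h_coord (j : ι) :
      HasSubgaussianMGF (fun x : ι → Ω => u (x j)) c (Measure.pi fun _ => μ) :=
    .of_map (measurable_pi_apply j).aemeasurable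
      (by rwa [(measurePreserving_eval (fun _ => μ) j).map_eq])
  simpa using HasSubgaussianMGF.sum_of_iIndepFun
    (iIndepFun_pi (X := fun _ => u) fun _ => h.aemeasurable) (s := Finset.univ)
    fun j _ => h_coord j

lemma lintegral_exp_sq_sum_sub_integral_le {ι : Type*} [Fintype ι] [Nonempty ι] {u : Ω → ℝ}
    (hu : AEMeasurable u μ) {a b : ℝ} (hab : a < b) (hmem : ∀ᵐ y ∂μ, u y ∈ Set.Icc a b) :
    ∫⁻ x : ι → Ω, ENNReal.ofReal
        (exp ((∑ j, (u (x j) - ∫ y, u y ∂μ)) ^ 2 / (Fintype.card ι * (b - a) ^ 2)))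
        ∂(Measure.pi fun _ => μ) ≤ ENNReal.ofReal √2 := by
  have h_sum := hasSubgaussianMGF_sum_pi (ι := ι) (hasSubgaussianMGF_of_mem_Icc hu hmem)
  have hc : 0 < (Fintype.card ι : ℝ≥0) * (‖b - a‖₊ / 2) ^ 2 := by
    have : ‖b - a‖₊ ≠ 0 := by simpa [sub_eq_zero] using hab.ne'
    positivity
  convert lintegral_exp_sq_le_of_hasSubgaussianMGF hc h_sum using 6
  push_cast
  rw [norm_eq_abs, div_pow, sq_abs]
  ring

lemma lintegral_exp_norm_sq_average_sub_integral_le {f : Ω → ℂ} (hf : Measurable f)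
    (hf_le : ∀ y, ‖f y‖ ≤ 1) {N : ℕ} (hN : N ≠ 0) :
    ∫⁻ x : Fin N → Ω, ENNReal.ofReal
        (exp (N / 8 * ‖(1 / (N : ℂ)) * ∑ j, f (x j) - ∫ y, f y ∂μ‖ ^ 2))
        ∂(Measure.pi fun _ => μ) ≤ ENNReal.ofReal √2 := by
  have : Nonempty (Fin N) := ⟨⟨0, Nat.pos_of_ne_zero hN⟩⟩
  have hf_int : Integrable f μ := .of_bound hf.aestronglyMeasurable 1 (ae_of_all _ hf_le)
  have h_bound (u : Ω → ℝ) (hu : Measurable u) (hu_mem : ∀ y, u y ∈ Set.Icc (-1) 1) :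
      ∫⁻ x : Fin N → Ω, ENNReal.ofReal
          (exp ((∑ j, (u (x j) - ∫ y, u y ∂μ)) ^ 2 / (4 * N)))
          ∂(Measure.pi fun _ => μ) ≤ ENNReal.ofReal √2 := by
    convert lintegral_exp_sq_sum_sub_integral_le (ι := Fin N) (μ := μ) hu.aemeasurable
      (by norm_num) (ae_of_all _ hu_mem) using 6
    norm_num [mul_comm]
  set S_re : (Fin N → Ω) → ℝ := fun x => ∑ j, ((f (x j)).re - ∫ y, (f y).re ∂μ)
  set S_im : (Fin N → Ω) → ℝ := fun x => ∑ j, ((f (x j)).im - ∫ y, (f y).im ∂μ)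
  have h_exponent (x : Fin N → Ω) :
      N / 8 * ‖(1 / (N : ℂ)) * ∑ j, f (x j) - ∫ y, f y ∂μ‖ ^ 2
        = (S_re x ^ 2 / (4 * N) + S_im x ^ 2 / (4 * N)) / 2 := by
    have h_re : ∫ y, (f y).re ∂μ = (∫ y, f y ∂μ).re := by simpa using integral_re hf_int
    have h_im : ∫ y, (f y).im ∂μ = (∫ y, f y ∂μ).im := by simpa using integral_im hf_int
    rw [norm_sq_average_sub hN]
    simp only [S_re, S_im, h_re, h_im]
    field_simp
    ring
  calc _ = ∫⁻ x, ENNReal.ofReal (exp ((S_re x ^ 2 / (4 * N) + S_im x ^ 2 / (4 * N)) / 2))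
          ∂(Measure.pi fun _ => μ) := lintegral_congr fun x => by rw [h_exponent x]
    _ ≤ (∫⁻ x, ENNReal.ofReal (exp (S_re x ^ 2 / (4 * N))) ∂(Measure.pi fun _ => μ)) / 2
          + (∫⁻ x, ENNReal.ofReal (exp (S_im x ^ 2 / (4 * N))) ∂(Measure.pi fun _ => μ)) / 2 :=
        lintegral_ofReal_exp_add_div_two_le (by fun_prop)
    _ ≤ ENNReal.ofReal √2 / 2 + ENNReal.ofReal √2 / 2 := by
        refine add_le_add (ENNReal.div_le_div_right ?_ 2) (ENNReal.div_le_div_right ?_ 2)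
        · exact h_bound (fun y => (f y).re) (by fun_prop) fun y =>
            abs_le.mp ((Complex.abs_re_le_norm _).trans (hf_le y))
        · exact h_bound (fun y => (f y).im) (by fun_prop) fun y =>
            abs_le.mp ((Complex.abs_im_le_norm _).trans (hf_le y))
    _ = ENNReal.ofReal √2 := ENNReal.add_halves _

end SubGaussian

lemma isProbabilityMeasure_densMeasure {d : ℕ} {ρ : (Fin d → ℝ) → ℝ} (hρ : IsProbDensity ρ) :
    IsProbabilityMeasure (densMeasure ρ) := by
  obtain ⟨hρ_meas, hρ_nonneg, hρ_one⟩ := hρ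
  have hρ_int : Integrable ρ := by
    by_contra h
    rw [integral_undef h] at hρ_one
    exact zero_ne_one hρ_one
  constructor
  rw [densMeasure, withDensity_apply _ MeasurableSet.univ, Measure.restrict_univ,
    ← ofReal_integral_eq_lintegral_ofReal hρ_int (ae_of_all _ hρ_nonneg), hρ_one,
    ENNReal.ofReal_one]

lemma integral_mul_density_eq_integral_densMeasure {d : ℕ} {ρ : (Fin d → ℝ) → ℝ}
    (hρ_meas : Measurable ρ) (hρ_nonneg : ∀ x, 0 ≤ ρ x) (g : (Fin d → ℝ) → ℂ) :
    ∫ y, g y * (ρ y : ℂ) = ∫ y, g y ∂densMeasure ρ := by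
  have h_density : densMeasure ρ = volume.withDensity fun x => ((ρ x).toNNReal : ℝ≥0∞) := rfl
  rw [h_density, integral_withDensity_eq_integral_smul hρ_meas.real_toNNReal]
  refine integral_congr_ae (ae_of_all _ fun y => ?_)
  dsimp only
  rw [NNReal.smul_def, Real.coe_toNNReal _ (hρ_nonneg y), Complex.real_smul, mul_comm]

theorem exp_moment_fourier_mode_general {d : ℕ} (ρ : (Fin d → ℝ) → ℝ) (hρ : IsProbDensity ρ)
    (Cα : ℝ) :
    ∃ η > (0 : ℝ), ∃ C : ℝ, ∀ ξ : Fin d → ℝ, ∀ N : ℕ, 2 ≤ N →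
      ∫⁻ x : Fin N → (Fin d → ℝ),
          ENNReal.ofReal (Real.exp ((N : ℝ) * η * Cα *
            ‖(1 / (N : ℂ)) * (∑ j, Complex.exp (Complex.I * ((∑ l, ξ l * x j l : ℝ) : ℂ)))
              - ∫ y : Fin d → ℝ,
                  Complex.exp (Complex.I * ((∑ l, ξ l * y l : ℝ) : ℂ)) * (ρ y : ℂ)‖ ^ 2))
        ∂(Measure.pi fun _ : Fin N => densMeasure ρ) ≤ ENNReal.ofReal C := by
  have := isProbabilityMeasure_densMeasure hρ
  refine ⟨1 / (8 * max Cα 1), by positivity, √2, fun ξ N hN => ?_⟩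
  set f : (Fin d → ℝ) → ℂ := fun y => Complex.exp (Complex.I * ((∑ l, ξ l * y l : ℝ) : ℂ))
  have hf_norm (y : Fin d → ℝ) : ‖f y‖ ≤ 1 := by
    simp only [f]
    rw [mul_comm, Complex.norm_exp_ofReal_mul_I]
  have h_coeff : (N : ℝ) * (1 / (8 * max Cα 1)) * Cα ≤ N / 8 := by
    have h_max_pos : 0 < max Cα 1 := lt_max_of_lt_right one_pos
    rw [mul_assoc, div_eq_mul_one_div (N : ℝ) 8, one_div_mul_eq_div]
    refine mul_le_mul_of_nonneg_left ?_ N.cast_nonneg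
    rw [div_le_div_iff₀ (by positivity) (by norm_num)]
    nlinarith [le_max_left Cα 1]
  rw [integral_mul_density_eq_integral_densMeasure hρ.1 hρ.2.1]
  refine le_trans (lintegral_mono fun x => ?_)
    (lintegral_exp_norm_sq_average_sub_integral_le (by fun_prop) hf_norm (by omega))
  exact ENNReal.ofReal_le_ofReal (exp_le_exp.mpr (by gcongr))

/-- with `X₁,…,X_N` i.i.d. from `ρ`, `α > d/2` and
`C_α = ∫ (1+|ξ|²)^{−α} dξ`, there exist `η > 0` (depending on `α` and `W`) and a constant `C`
such that `sup_ξ sup_{N≥2} 𝔼 exp(N η C_α |μ̂_N(ξ) − ρ̂(ξ)|²) ≤ C`. -/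
theorem exp_moment_fourier_mode {d : ℕ} (ρ W : (Fin d → ℝ) → ℝ) (hρ : IsProbDensity ρ)
    (hW : Measurable W) (hWbdd : ∃ M, ∀ z, |W z| ≤ M) (hWsymm : ∀ z, W (-z) = W z)
    (α : ℝ) (hα : (d : ℝ) / 2 < α)
    (Cα : ℝ) (hCα : Cα = ∫ ξ : Fin d → ℝ, ((1 : ℝ) + ∑ l, ξ l ^ 2) ^ (-α)) :
    ∃ η > (0 : ℝ), ∃ C : ℝ, ∀ ξ : Fin d → ℝ, ∀ N : ℕ, 2 ≤ N →
      ∫⁻ x : Fin N → (Fin d → ℝ),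
          ENNReal.ofReal (Real.exp ((N : ℝ) * η * Cα *
            ‖(1 / (N : ℂ)) * (∑ j, Complex.exp (Complex.I * ((∑ l, ξ l * x j l : ℝ) : ℂ)))
              - ∫ y : Fin d → ℝ,
                  Complex.exp (Complex.I * ((∑ l, ξ l * y l : ℝ) : ℂ)) * (ρ y : ℂ)‖ ^ 2))
        ∂(Measure.pi fun _ : Fin N => densMeasure ρ) ≤ ENNReal.ofReal C :=
  exp_moment_fourier_mode_general ρ hρ Cα
end
end
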